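/- For every λ ∈ Λ = ℂ ∖ {−2, −2ω, −2ω², 0, 1, ω, ω²} and every j ∈ {1, …, 12}, the conic Q_j(λ) : f_j(λ) = 0 is smooth: for every (x,y,z) ∈ ℂ³ ∖ {(0,0,0)} with f_j(λ)(x,y,z) = 0, the gradient (∂f_j(λ)/∂x, ∂f_j(λ)/∂y, ∂f_j(λ)/∂z) does not vanish at (x,y,z). -/

import Mathlib

open MvPolynomial

set_option maxHeartbeats 1000000

/-- The twelve conics `Q_j(λ) : f_j(λ) = 0` of the Hesse arrangement of conics,
as quadratic forms in `ℂ[x,y,z]` (variables `X 0 = x`, `X 1 = y`, `X 2 = z`),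
depending on the parameter `lam = λ` and on a primitive cube root of unity `ω`.
The index `j : Fin 12` corresponds to `f_{j+1}(λ)` of the paper. -/
noncomputable def hesseConic (ω lam : ℂ) : Fin 12 → MvPolynomial (Fin 3) ℂ :=
  ![X 0 ^ 2 + C (lam + 1) * (C ω * (X 0 * X 1) + C (ω ^ 2) * (X 0 * X 2) + X 1 * X 2)
      + C (ω ^ 2) * X 1 ^ 2 + C ω * X 2 ^ 2,
    X 0 ^ 2 + C (lam + 1) * (C (ω ^ 2) * (X 0 * X 1) + C ω * (X 0 * X 2) + X 1 * X 2)
      + C ω * X 1 ^ 2 + C (ω ^ 2) * X 2 ^ 2,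
    X 0 * X 1 - C lam * X 2 ^ 2,
    X 0 ^ 2 + C (ω * lam + 1) * (X 0 * X 1 + C ω * (X 0 * X 2) + C ω * (X 1 * X 2))
      + X 1 ^ 2 + C (ω ^ 2) * X 2 ^ 2,
    X 0 ^ 2 + C (ω ^ 2 * lam + 1) *
        (X 0 * X 1 + C (ω ^ 2) * (X 0 * X 2) + C (ω ^ 2) * (X 1 * X 2))
      + X 1 ^ 2 + C ω * X 2 ^ 2,
    X 0 ^ 2 + C (ω * lam + ω ^ 2) * (X 0 * X 1 + X 1 * X 2 + C ω * (X 0 * X 2))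
      + C ω * X 1 ^ 2 + X 2 ^ 2,
    - (C lam) * X 1 ^ 2 + X 0 * X 2,
    X 0 ^ 2 + C (ω ^ 2 * lam + ω) * (X 0 * X 1 + X 1 * X 2 + C (ω ^ 2) * (X 0 * X 2))
      + C (ω ^ 2) * X 1 ^ 2 + X 2 ^ 2,
    X 0 ^ 2 + C (lam + ω ^ 2) * (X 0 * X 1 + X 0 * X 2 + C (ω ^ 2) * (X 1 * X 2))
      + C ω * X 1 ^ 2 + C ω * X 2 ^ 2,
    X 0 ^ 2 + C (lam + ω) * (X 0 * X 1 + X 0 * X 2 + C ω * (X 1 * X 2))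
      + C (ω ^ 2) * (X 1 ^ 2 + X 2 ^ 2),
    C lam * X 0 ^ 2 - X 1 * X 2,
    X 0 ^ 2 + C (lam + 1) * (X 0 * X 1 + X 0 * X 2 + X 1 * X 2) + X 1 ^ 2 + X 2 ^ 2]

/-- Representative vectors in `ℂ³` of the nine points `p_k(λ)` of `𝒫₉(λ)`;
the index `k : Fin 9` corresponds to `p_{k+1}(λ)` of the paper. -/
noncomputable def hessePoint (ω lam : ℂ) : Fin 9 → Fin 3 → ℂ :=
  ![![lam, 1, 1], ![1, lam, 1], ![1, 1, lam],
    ![lam, ω, ω ^ 2], ![ω ^ 2, lam, ω], ![ω, ω ^ 2, lam],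
    ![lam, ω ^ 2, ω], ![ω, lam, ω ^ 2], ![ω ^ 2, ω, lam]]

/-- The set `Λ = ℂ ∖ {−2, −2ω, −2ω², 0, 1, ω, ω²}` of regular parameter values. -/
def hesseLambda (ω : ℂ) : Set ℂ :=
  {lam | lam ∉ ({-2, -2 * ω, -2 * ω ^ 2, 0, 1, ω, ω ^ 2} : Set ℂ)}

/-!
The gradient of the quadratic form `vᵀ A v` is `(A + Aᵀ) v`, so the conic can only be singular
at a nonzero point if `det (A + Aᵀ) = 0`. For the twelve conics this determinant is `±2λ` or
`2r (λ - r)² (λ + 2r)` with `r ∈ {1, ω, ω²}` a cube root of unity, and these vanish only on the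
excluded parameters `0, r, -2r`.
-/

noncomputable def quadForm {σ R : Type*} [Fintype σ] [CommSemiring R] (A : Matrix σ σ R) :
    MvPolynomial σ R :=
  ∑ i, ∑ j, C (A i j) * (X i * X j)

theorem eval_pderiv_quadForm {σ R : Type*} [Fintype σ] [DecidableEq σ] [CommSemiring R]
    (A : Matrix σ σ R) (v : σ → R) (k : σ) :
    eval v (pderiv k (quadForm A)) = ((A + A.transpose).mulVec v) k := by
  simp [quadForm, Matrix.mulVec, dotProduct, pderiv_X, Pi.single_apply, Finset.sum_add_distrib,
    add_mul, mul_add, add_comm]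

theorem quadForm_gradient_ne_zero {σ R : Type*} [Fintype σ] [DecidableEq σ] [CommRing R]
    [IsDomain R] {A : Matrix σ σ R} (hA : (A + A.transpose).det ≠ 0) {v : σ → R} (hv : v ≠ 0) :
    ¬ ∀ k, eval v (pderiv k (quadForm A)) = 0 := fun hgrad =>
  hv <| Matrix.eq_zero_of_mulVec_eq_zero hA <| funext fun k => by
    rw [← eval_pderiv_quadForm]
    exact hgrad k

noncomputable def hesseCoeff (ω lam : ℂ) : Fin 12 → Matrix (Fin 3) (Fin 3) ℂ :=
  ![!![1, (lam + 1) * ω, (lam + 1) * ω ^ 2; 0, ω ^ 2, lam + 1; 0, 0, ω],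
    !![1, (lam + 1) * ω ^ 2, (lam + 1) * ω; 0, ω, lam + 1; 0, 0, ω ^ 2],
    !![0, 1, 0; 0, 0, 0; 0, 0, -lam],
    !![1, ω * lam + 1, (ω * lam + 1) * ω; 0, 1, (ω * lam + 1) * ω; 0, 0, ω ^ 2],
    !![1, ω ^ 2 * lam + 1, (ω ^ 2 * lam + 1) * ω ^ 2; 0, 1, (ω ^ 2 * lam + 1) * ω ^ 2; 0, 0, ω],
    !![1, ω * lam + ω ^ 2, (ω * lam + ω ^ 2) * ω; 0, ω, ω * lam + ω ^ 2; 0, 0, 1],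
    !![0, 0, 1; 0, -lam, 0; 0, 0, 0],
    !![1, ω ^ 2 * lam + ω, (ω ^ 2 * lam + ω) * ω ^ 2; 0, ω ^ 2, ω ^ 2 * lam + ω; 0, 0, 1],
    !![1, lam + ω ^ 2, lam + ω ^ 2; 0, ω, (lam + ω ^ 2) * ω ^ 2; 0, 0, ω],
    !![1, lam + ω, lam + ω; 0, ω ^ 2, (lam + ω) * ω; 0, 0, ω ^ 2],
    !![lam, 0, 0; 0, 0, -1; 0, 0, 0],
    !![1, lam + 1, lam + 1; 0, 1, lam + 1; 0, 0, 1]]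

theorem hesseConic_eq_quadForm (ω lam : ℂ) (j : Fin 12) :
    hesseConic ω lam j = quadForm (hesseCoeff ω lam j) := by
  fin_cases j <;> simp [hesseConic, hesseCoeff, quadForm, Fin.sum_univ_three] <;> ring

noncomputable def cubeRootFactor (r lam : ℂ) : ℂ :=
  2 * r * (lam - r) ^ 2 * (lam + 2 * r)

theorem cubeRootFactor_ne_zero {r lam : ℂ} (hr : r ≠ 0) (hlr : lam ≠ r) (hl2r : lam ≠ -2 * r) :
    cubeRootFactor r lam ≠ 0 := by
  have hsum : lam + 2 * r ≠ 0 := fun h => hl2r (by linear_combination h)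
  unfold cubeRootFactor
  exact mul_ne_zero (mul_ne_zero (mul_ne_zero two_ne_zero hr) (pow_ne_zero 2 (sub_ne_zero.2 hlr)))
    hsum

noncomputable def hesseDiscr (ω lam : ℂ) : Fin 12 → ℂ :=
  ![cubeRootFactor 1 lam, cubeRootFactor 1 lam, 2 * lam, cubeRootFactor (ω ^ 2) lam,
    cubeRootFactor ω lam, cubeRootFactor ω lam, 2 * lam, cubeRootFactor (ω ^ 2) lam,
    cubeRootFactor (ω ^ 2) lam, cubeRootFactor ω lam, -(2 * lam), cubeRootFactor 1 lam]

theorem det_hesseCoeff_add_transpose {ω : ℂ} (hω : ω ^ 2 + ω + 1 = 0) (lam : ℂ) (j : Fin 12) :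
    (hesseCoeff ω lam j + (hesseCoeff ω lam j).transpose).det = hesseDiscr ω lam j := by
  fin_cases j <;> simp [hesseCoeff, hesseDiscr, cubeRootFactor, Matrix.det_fin_three] <;> grind

theorem hesseDiscr_ne_zero {ω lam : ℂ} (hω : ω ^ 2 + ω + 1 = 0) (hlam : lam ∈ hesseLambda ω)
    (j : Fin 12) : hesseDiscr ω lam j ≠ 0 := by
  simp only [hesseLambda, Set.mem_ofPred_eq, Set.mem_insert_iff, Set.mem_singleton_iff,
    not_or] at hlam
  obtain ⟨hl₁, hlω, hlω₂, hl0, hl1, hlω', hlω₂'⟩ := hlam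
  have hω0 : ω ≠ 0 := by rintro rfl; norm_num at hω
  have hf1 : cubeRootFactor 1 lam ≠ 0 :=
    cubeRootFactor_ne_zero one_ne_zero hl1 (by simpa using hl₁)
  have hfω : cubeRootFactor ω lam ≠ 0 := cubeRootFactor_ne_zero hω0 hlω' hlω
  have hfω₂ : cubeRootFactor (ω ^ 2) lam ≠ 0 :=
    cubeRootFactor_ne_zero (pow_ne_zero 2 hω0) hlω₂' hlω₂
  fin_cases j <;> simp [hesseDiscr, hf1, hfω, hfω₂, hl0]

theorem stmt_6_general (ω : ℂ) (hω : ω ^ 2 + ω + 1 = 0)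
    (lam : ℂ) (hlam : lam ∈ hesseLambda ω) (j : Fin 12)
    (v : Fin 3 → ℂ) (hv : v ≠ 0) :
    ¬ ∀ i : Fin 3, eval v (pderiv i (hesseConic ω lam j)) = 0 := by
  rw [hesseConic_eq_quadForm]
  refine quadForm_gradient_ne_zero ?_ hv
  rw [det_hesseCoeff_add_transpose hω]
  exact hesseDiscr_ne_zero hω hlam j

/-- For every `λ ∈ Λ` and every `j`, the conic `Q_j(λ) : f_j(λ) = 0`
is smooth: at every nonzero `(x,y,z) ∈ ℂ³` with `f_j(λ)(x,y,z) = 0`, the gradient of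
`f_j(λ)` does not vanish. -/
theorem stmt_6 (ω : ℂ) (hω : ω ^ 2 + ω + 1 = 0)
    (lam : ℂ) (hlam : lam ∈ hesseLambda ω) (j : Fin 12)
    (v : Fin 3 → ℂ) (hv : v ≠ 0) (hzero : eval v (hesseConic ω lam j) = 0) :
    ¬ ∀ i : Fin 3, eval v (pderiv i (hesseConic ω lam j)) = 0 :=
  stmt_6_general ω hω lam hlam j v hv
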